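/- arXiv:math/0607632 — 2 statements merged into one kernel-verified Lean document; each statement's English description precedes it below -/
import Mathlib

section
/- For complex numbers z and w, with F(z) = |z|^p z and p > 0, one has |F_z(z) - F_z(w)| ≤ C |z-w|^{min(1,p)} (|z|+|w|)^{p - min(1,p)} where F_z(z) = ((p+2)/2)|z|^p, for some constant C depending only on p. In particular, | |z|^p - |w|^p | ≤ C |z-w|^{min(1,p)}(|z|+|w|)^{p-min(1,p)} for all z, w ∈ ℂ. -/
open Real Set

lemma real_rpow_add_le_add_rpow (p x y : ℝ) (hp : 0 ≤ p) (hp1 : p ≤ 1)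
    (hx : 0 ≤ x) (hy : 0 ≤ y) : (x + y) ^ p ≤ x ^ p + y ^ p := by
  have h := NNReal.rpow_add_le_add_rpow x.toNNReal y.toNNReal hp hp1
  rw [← NNReal.coe_le_coe] at h
  push_cast at h
  rwa [Real.coe_toNNReal _ hx, Real.coe_toNNReal _ hy] at h

lemma key_rpow_sub (p : ℝ) (hp : 0 < p) {a b : ℝ} (ha : 0 ≤ a) (hb : 0 ≤ b) :
    |a ^ p - b ^ p| ≤ (max 1 p) * |a - b| ^ min 1 p * (a + b) ^ (p - min 1 p) := by
  wlog hab : b ≤ a generalizing a b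
  · have := this hb ha (le_of_not_ge hab)
    rwa [abs_sub_comm, abs_sub_comm b a, add_comm] at this
  have hK : (1 : ℝ) ≤ max 1 p := le_max_left _ _
  rcases le_or_gt p 1 with h1 | h1
  · rw [min_eq_right h1, sub_self, rpow_zero, mul_one]
    have hd : 0 ≤ a - b := by linarith
    have hsub : a ^ p - b ^ p ≤ (a - b) ^ p := by
      have h := real_rpow_add_le_add_rpow p (a - b) b hp.le h1 hd hb
      rw [sub_add_cancel] at h; linarith
    have hmono : b ^ p ≤ a ^ p := Real.rpow_le_rpow hb hab hp.le
    rw [abs_of_nonneg (by linarith), abs_of_nonneg hd]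
    calc a ^ p - b ^ p ≤ (a - b) ^ p := hsub
      _ ≤ max 1 p * (a - b) ^ p :=
        le_mul_of_one_le_left (Real.rpow_nonneg hd p) hK
  · rw [min_eq_left h1.le]
    have hder : ∀ x ∈ Icc b a,
        HasDerivWithinAt (fun x : ℝ => x ^ p) (p * x ^ (p - 1)) (Icc b a) x := fun x _ =>
      (Real.hasDerivAt_rpow_const (Or.inr h1.le)).hasDerivWithinAt
    have bound : ∀ x ∈ Ico b a, ‖p * x ^ (p - 1)‖ ≤ p * (a + b) ^ (p - 1) := by
      intro x hx
      have hx0 : 0 ≤ x := hb.trans hx.1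
      rw [Real.norm_eq_abs, abs_of_nonneg (mul_nonneg hp.le (Real.rpow_nonneg hx0 _))]
      have : x ^ (p - 1) ≤ (a + b) ^ (p - 1) :=
        Real.rpow_le_rpow hx0 (by linarith [hx.2.le]) (by linarith)
      nlinarith
    have hmvt := norm_image_sub_le_of_norm_deriv_le_segment' hder bound a
      (right_mem_Icc.2 hab)
    rw [Real.norm_eq_abs] at hmvt
    have hd : 0 ≤ a - b := by linarith
    have hsum : 0 ≤ (a + b) ^ (p - 1) := Real.rpow_nonneg (by linarith) _
    rw [abs_of_nonneg hd, Real.rpow_one, max_eq_right h1.le]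
    calc |a ^ p - b ^ p| ≤ p * (a + b) ^ (p - 1) * (a - b) := hmvt
      _ = p * (a - b) * (a + b) ^ (p - 1) := by ring

/-- Modulus of continuity of F' for F(z) = |z|^p z:
|F_z(z) - F_z(w)| ≤ C |z-w|^{min(1,p)} (|z|+|w|)^{p - min(1,p)}, where F_z(z) = ((p+2)/2)|z|^p;
in particular ||z|^p - |w|^p| ≤ C |z-w|^{min(1,p)} (|z|+|w|)^{p - min(1,p)}. -/
theorem stmt_4 (p : ℝ) (hp : 0 < p) :
    ∃ C : ℝ, 0 < C ∧ ∀ z w : ℂ,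
      |((p + 2) / 2) * ‖z‖ ^ p - ((p + 2) / 2) * ‖w‖ ^ p| ≤
        C * ‖z - w‖ ^ min 1 p * (‖z‖ + ‖w‖) ^ (p - min 1 p) ∧
      |‖z‖ ^ p - ‖w‖ ^ p| ≤
        C * ‖z - w‖ ^ min 1 p * (‖z‖ + ‖w‖) ^ (p - min 1 p) := by
  refine ⟨((p + 2) / 2 + 1) * max 1 p, by positivity, fun z w => ?_⟩
  have ha : (0 : ℝ) ≤ ‖z‖ := norm_nonneg _
  have hb : (0 : ℝ) ≤ ‖w‖ := norm_nonneg _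
  have hm : 0 ≤ min 1 p := le_min zero_le_one hp.le
  have hkey := key_rpow_sub p hp ha hb
  have h1 : |‖z‖ - ‖w‖| ^ min 1 p ≤ ‖z - w‖ ^ min 1 p :=
    Real.rpow_le_rpow (abs_nonneg _) (abs_norm_sub_norm_le z w) hm
  have hsum : 0 ≤ (‖z‖ + ‖w‖) ^ (p - min 1 p) := Real.rpow_nonneg (by linarith) _
  have hK : (1 : ℝ) ≤ max 1 p := le_max_left _ _
  have hE : |‖z‖ ^ p - ‖w‖ ^ p| ≤ max 1 p * (‖z - w‖ ^ min 1 p * (‖z‖ + ‖w‖) ^ (p - min 1 p)) := by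
    calc |‖z‖ ^ p - ‖w‖ ^ p| ≤ max 1 p * |‖z‖ - ‖w‖| ^ min 1 p * (‖z‖ + ‖w‖) ^ (p - min 1 p) :=
          hkey
      _ ≤ max 1 p * (‖z - w‖ ^ min 1 p * (‖z‖ + ‖w‖) ^ (p - min 1 p)) := by
          rw [mul_assoc]
          gcongr
  have hD : 0 ≤ ‖z - w‖ ^ min 1 p * (‖z‖ + ‖w‖) ^ (p - min 1 p) :=
    mul_nonneg (Real.rpow_nonneg (norm_nonneg _) _) hsum
  constructor
  · rw [← mul_sub, abs_mul, abs_of_nonneg (by linarith : (0:ℝ) ≤ (p + 2) / 2)]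
    nlinarith [abs_nonneg (‖z‖ ^ p - ‖w‖ ^ p)]
  · nlinarith [abs_nonneg (‖z‖ ^ p - ‖w‖ ^ p)]
end

section
/- For all complex numbers z, w and p > 0, |F(z+w) - F(z)| ≤ C (|w| |z|^p + |w|^{p+1}) for some constant C depending only on p, where F(z) = |z|^p z. -/
/-!
Write `u = z + w`, `v = z` and assume `‖v‖ ≤ ‖u‖`. Splitting
`‖u‖ ^ p • u - ‖v‖ ^ p • v = ‖u‖ ^ p • (u - v) + (‖u‖ ^ p - ‖v‖ ^ p) • v`,
the second term is controlled by `(a ^ p - b ^ p) b ≤ p a ^ p (a - b)` for `a, b ≥ 0`, a rearrangement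
of the weighted AM-GM inequality `a ^ p b ≤ p/(p+1) a ^ (p+1) + 1/(p+1) b ^ (p+1)`. This gives
`‖F u - F v‖ ≤ (1 + p) max(‖u‖, ‖v‖) ^ p ‖u - v‖`, and `max(‖z + w‖, ‖z‖) ^ p ≤ 2 ^ p (‖z‖ ^ p + ‖w‖ ^ p)`.
-/

open Real

namespace Real

lemma rpow_sub_rpow_mul_le {p a b : ℝ} (hp : 0 ≤ p) (ha : 0 ≤ a) (hb : 0 ≤ b) :
    (a ^ p - b ^ p) * b ≤ p * a ^ p * (a - b) := by
  have hp1 : 0 < p + 1 := by linarith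
  have amgm := geom_mean_le_arith_mean2_weighted (div_nonneg hp hp1.le)
    (one_div_nonneg.mpr hp1.le) (rpow_nonneg ha (p + 1)) (rpow_nonneg hb (p + 1))
    (by field_simp)
  rw [← rpow_mul ha, ← rpow_mul hb, mul_div_cancel₀ _ hp1.ne', mul_one_div_cancel hp1.ne',
    rpow_one, rpow_add_one' ha hp1.ne', rpow_add_one' hb hp1.ne'] at amgm
  rw [div_mul_eq_mul_div, one_div_mul_eq_div, ← add_div, le_div_iff₀ hp1] at amgm
  linarith

lemma add_rpow_le_two_rpow_mul_rpow_add_rpow {p a b : ℝ} (hp : 0 ≤ p) (ha : 0 ≤ a)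
    (hb : 0 ≤ b) : (a + b) ^ p ≤ 2 ^ p * (a ^ p + b ^ p) := calc
  (a + b) ^ p ≤ (2 * max a b) ^ p := by
    rw [two_mul]; gcongr <;> simp
  _ = 2 ^ p * max a b ^ p := mul_rpow zero_le_two (le_max_of_le_left ha)
  _ ≤ 2 ^ p * (a ^ p + b ^ p) := by
    gcongr
    rcases le_total a b with hab | hba
    · rw [max_eq_right hab]; linarith [rpow_nonneg ha p]
    · rw [max_eq_left hba]; linarith [rpow_nonneg hb p]

end Real

section NormedSpace

variable {E : Type*} [SeminormedAddCommGroup E] [NormedSpace ℝ E] {p : ℝ}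

lemma norm_rpow_smul_sub_rpow_smul_le_of_norm_le (hp : 0 ≤ p) {u v : E} (hvu : ‖v‖ ≤ ‖u‖) :
    ‖‖u‖ ^ p • u - ‖v‖ ^ p • v‖ ≤ (1 + p) * ‖u‖ ^ p * ‖u - v‖ := by
  have hpow : ‖v‖ ^ p ≤ ‖u‖ ^ p := rpow_le_rpow (norm_nonneg v) hvu hp
  have hsplit : ‖u‖ ^ p • u - ‖v‖ ^ p • v = ‖u‖ ^ p • (u - v) + (‖u‖ ^ p - ‖v‖ ^ p) • v := by
    rw [smul_sub, sub_smul]; abel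
  have hdiff : (‖u‖ ^ p - ‖v‖ ^ p) * ‖v‖ ≤ p * ‖u‖ ^ p * ‖u - v‖ :=
    (rpow_sub_rpow_mul_le hp (norm_nonneg u) (norm_nonneg v)).trans <| by
      gcongr; exact norm_sub_norm_le u v
  calc ‖‖u‖ ^ p • u - ‖v‖ ^ p • v‖
      ≤ ‖u‖ ^ p * ‖u - v‖ + (‖u‖ ^ p - ‖v‖ ^ p) * ‖v‖ := by
        rw [hsplit]
        refine (norm_add_le _ _).trans_eq ?_
        rw [norm_smul, norm_smul, norm_of_nonneg (rpow_nonneg (norm_nonneg u) p),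
          norm_of_nonneg (sub_nonneg.mpr hpow)]
    _ ≤ (1 + p) * ‖u‖ ^ p * ‖u - v‖ := by linarith

lemma norm_rpow_smul_sub_rpow_smul_le (hp : 0 ≤ p) (u v : E) :
    ‖‖u‖ ^ p • u - ‖v‖ ^ p • v‖ ≤ (1 + p) * max ‖u‖ ‖v‖ ^ p * ‖u - v‖ := by
  rcases le_total ‖v‖ ‖u‖ with hvu | huv
  · rw [max_eq_left hvu]
    exact norm_rpow_smul_sub_rpow_smul_le_of_norm_le hp hvu
  · rw [max_eq_right huv, ← norm_neg, neg_sub, norm_sub_rev u v]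
    exact norm_rpow_smul_sub_rpow_smul_le_of_norm_le hp huv

end NormedSpace

/-- For F(z) = |z|^p z, |F(z+w) - F(z)| ≤ C (|w| |z|^p + |w|^{p+1}). -/
theorem stmt_5 (p : ℝ) (hp : 0 < p) :
    ∃ C : ℝ, 0 < C ∧ ∀ z w : ℂ,
      ‖((‖z + w‖ ^ p : ℝ) : ℂ) * (z + w) - ((‖z‖ ^ p : ℝ) : ℂ) * z‖ ≤
        C * (‖w‖ * ‖z‖ ^ p + ‖w‖ ^ (p + 1)) := by
  refine ⟨(1 + p) * 2 ^ p, by positivity, fun z w => ?_⟩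
  have hmax : max ‖z + w‖ ‖z‖ ^ p ≤ 2 ^ p * (‖z‖ ^ p + ‖w‖ ^ p) := calc
    max ‖z + w‖ ‖z‖ ^ p ≤ (‖z‖ + ‖w‖) ^ p := by
      gcongr
      exact max_le (norm_add_le z w) (le_add_of_nonneg_right (norm_nonneg w))
    _ ≤ 2 ^ p * (‖z‖ ^ p + ‖w‖ ^ p) :=
      add_rpow_le_two_rpow_mul_rpow_add_rpow hp.le (norm_nonneg z) (norm_nonneg w)
  calc ‖((‖z + w‖ ^ p : ℝ) : ℂ) * (z + w) - ((‖z‖ ^ p : ℝ) : ℂ) * z‖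
      = ‖‖z + w‖ ^ p • (z + w) - ‖z‖ ^ p • z‖ := by simp only [Complex.real_smul]
    _ ≤ (1 + p) * max ‖z + w‖ ‖z‖ ^ p * ‖w‖ := by
      simpa using norm_rpow_smul_sub_rpow_smul_le hp.le (z + w) z
    _ ≤ (1 + p) * (2 ^ p * (‖z‖ ^ p + ‖w‖ ^ p)) * ‖w‖ := by gcongr
    _ = (1 + p) * 2 ^ p * (‖w‖ * ‖z‖ ^ p + ‖w‖ ^ (p + 1)) := by
      rw [rpow_add_one' (norm_nonneg w) (by positivity)]; ring
end
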